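/- Let p and q be coprime integers with q ≥ 1, let T = (ℝ/ℤ) × (ℝ/ℤ) be the 2-torus, and let r : T → T be the rotation r(x, y) = (x + p/q, y). Suppose c : ℝ/ℤ → T is a continuous injective loop (a simple closed curve) whose image is invariant under r, i.e. r maps the image of c onto itself. Let c̃ : ℝ → ℝ² be any continuous lift of c, i.e. π ∘ c̃ = c ∘ π₀ where π : ℝ² → T and π₀ : ℝ → ℝ/ℤ are the quotient maps, and write c̃(1) − c̃(0) = (k, l) ∈ ℤ × ℤ. Then q divides l. -/

import Mathlib

/-!
Because `c` embeds the compact circle, the rotation `r = (· + (p/q, 0))` restricts to a continuous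
self-map `φ` of the circle with `c ∘ φ = r ∘ c`, and `φ^[q] = id` since `r^[q] = id`. A lift
`ψ : ℝ → ℝ` of `φ` then satisfies `ψ^[q] = (· + n)` for an integer `n`, while `c̃ ∘ ψ = c̃ + w`
for a vector `w ≡ (p/q, 0) mod ℤ²`. Evaluating `c̃ (ψ^[q] 0)` in both ways gives `q • w = n • (k, l)`:
the first coordinate says `n k ≡ p (mod q)`, so `n` is prime to `q`, and the second says `q ∣ n l`.
-/

open Function Set

def torusProj : ℝ × ℝ →+ UnitAddCircle × UnitAddCircle :=
  (QuotientAddGroup.mk' _).prodMap (QuotientAddGroup.mk' _)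

@[simp]
lemma torusProj_apply (v : ℝ × ℝ) :
    torusProj v = ((v.1 : UnitAddCircle), (v.2 : UnitAddCircle)) :=
  rfl

lemma UnitAddCircle.exists_continuous_lift {f : ℝ → UnitAddCircle} (hf : Continuous f) :
    ∃ F : ℝ → ℝ, Continuous F ∧ ∀ x, (F x : UnitAddCircle) = f x := by
  obtain ⟨x₀, hx₀⟩ := QuotientAddGroup.mk_surjective (f 0)
  obtain ⟨F, ⟨-, hF⟩, -⟩ :=
    (AddCircle.isCoveringMap_coe (1 : ℝ)).existsUnique_continuousMap_lifts ⟨f, hf⟩ 0 x₀ hx₀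
  exact ⟨F, F.continuous, congrFun hF⟩

lemma const_of_torusProj_comp {X : Type*} [TopologicalSpace X] [PreconnectedSpace X]
    {F : X → ℝ × ℝ} (hF : Continuous F) (h : ∀ a a', torusProj (F a) = torusProj (F a'))
    (a a' : X) : F a = F a' :=
  Prod.ext
    ((AddCircle.isCoveringMap_coe (1 : ℝ)).const_of_comp hF.fst
      (fun a a' => congrArg Prod.fst (h a a')) a a')
    ((AddCircle.isCoveringMap_coe (1 : ℝ)).const_of_comp hF.snd
      (fun a a' => congrArg Prod.snd (h a a')) a a')

theorem exists_continuous_semiconj_of_injective {X Y : Type*} [TopologicalSpace X]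
    [CompactSpace X] [TopologicalSpace Y] [T2Space Y] {c : X → Y} (hc : Continuous c)
    (hinj : Injective c) {r : Y → Y} (hr : Continuous r) (hrc : MapsTo r (range c) (range c)) :
    ∃ φ : X → X, Continuous φ ∧ Semiconj c φ r := by
  choose φ hφ using fun x => hrc (mem_range_self x)
  refine ⟨φ, ?_, hφ⟩
  rw [(hc.isClosedEmbedding hinj).continuous_iff]
  exact (hr.comp hc).congr fun x => (hφ x).symm

section LiftToPlane

variable {c : UnitAddCircle → UnitAddCircle × UnitAddCircle} {ctilde : ℝ → ℝ × ℝ}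

lemma lift_apply_add_intCast (hct : Continuous ctilde) (hlift : ∀ x : ℝ, torusProj (ctilde x) = c x)
    (x : ℝ) (n : ℤ) : ctilde (x + n) = ctilde x + (n : ℝ) • (ctilde 1 - ctilde 0) := by
  have hstep : ∀ x, ctilde (x + 1) - ctilde x = ctilde 1 - ctilde 0 := fun x => by
    simpa using const_of_torusProj_comp (F := fun x => ctilde (x + 1) - ctilde x)
      ((hct.comp (continuous_add_const 1)).sub hct)
      (fun a a' => by simp only [map_sub, hlift, AddCircle.coe_add_period, sub_self]) x 0
  have hper : Periodic (fun x => ctilde x - x • (ctilde 1 - ctilde 0)) 1 := fun x => by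
    simp only [add_smul, one_smul]
    rw [← hstep x]
    abel
  have hn : ctilde (x + n) - (x + n) • (ctilde 1 - ctilde 0) =
      ctilde x - x • (ctilde 1 - ctilde 0) := by
    simpa only [mul_one] using hper.int_mul n x
  rw [sub_eq_iff_eq_add, add_smul] at hn
  rw [hn]
  abel

lemma exists_semiconj_lift_add {φ : UnitAddCircle → UnitAddCircle}
    {w₀ : UnitAddCircle × UnitAddCircle} (hφ : Semiconj c φ (· + w₀)) {ψ : ℝ → ℝ}
    (hψc : Continuous ψ) (hψ : Semiconj ((↑) : ℝ → UnitAddCircle) ψ φ)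
    (hct : Continuous ctilde) (hlift : ∀ x : ℝ, torusProj (ctilde x) = c x) :
    ∃ w : ℝ × ℝ, torusProj w = w₀ ∧ Semiconj ctilde ψ (· + w) := by
  have hproj : ∀ x, torusProj (ctilde (ψ x) - ctilde x) = w₀ := fun x => by
    rw [map_sub, hlift, hlift, hψ, hφ, add_sub_cancel_left]
  refine ⟨ctilde (ψ 0) - ctilde 0, hproj 0, fun x => ?_⟩
  have hconst : ctilde (ψ x) - ctilde x = ctilde (ψ 0) - ctilde 0 :=
    const_of_torusProj_comp (F := fun x => ctilde (ψ x) - ctilde x)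
      ((hct.comp hψc).sub hct) (fun a a' => by rw [hproj, hproj]) x 0
  show ctilde (ψ x) = ctilde x + (ctilde (ψ 0) - ctilde 0)
  rw [← hconst]
  abel

end LiftToPlane

lemma exists_iterate_eq_add_intCast {φ : UnitAddCircle → UnitAddCircle} {ψ : ℝ → ℝ}
    (hψc : Continuous ψ) (hψ : Semiconj ((↑) : ℝ → UnitAddCircle) ψ φ) {N : ℕ}
    (hN : φ^[N] = id) : ∃ n : ℤ, ∀ x, ψ^[N] x = x + n := by
  have hcoe : ∀ x, ((ψ^[N] x - x : ℝ) : UnitAddCircle) = 0 := fun x => by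
    rw [AddCircle.coe_sub, hψ.iterate_right N, hN, id, sub_self]
  obtain ⟨n, hn⟩ := (AddCircle.coe_eq_zero_iff 1).1 (hcoe 0)
  refine ⟨n, fun x => ?_⟩
  have hconst : ψ^[N] x - x = ψ^[N] 0 - 0 :=
    (AddCircle.isCoveringMap_coe (1 : ℝ)).const_of_comp (g := fun x => ψ^[N] x - x)
      ((hψc.iterate N).sub continuous_id) (fun a a' => by rw [hcoe, hcoe]) x 0
  rw [zsmul_one] at hn
  linarith

theorem exists_translation_smul_eq_smul_homologyClass {N : ℕ} {w₀ : UnitAddCircle × UnitAddCircle}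
    (hN : N • w₀ = 0) {c : UnitAddCircle → UnitAddCircle × UnitAddCircle} (hc : Continuous c)
    (hinj : Injective c) (hrc : MapsTo (· + w₀) (range c) (range c)) {ctilde : ℝ → ℝ × ℝ}
    (hct : Continuous ctilde) (hlift : ∀ x : ℝ, torusProj (ctilde x) = c x) :
    ∃ w : ℝ × ℝ, torusProj w = w₀ ∧ ∃ n : ℤ, (N : ℝ) • w = (n : ℝ) • (ctilde 1 - ctilde 0) := by
  obtain ⟨φ, hφc, hφ⟩ :=
    exists_continuous_semiconj_of_injective hc hinj (continuous_add_const w₀) hrc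
  obtain ⟨ψ, hψc, hψ⟩ := UnitAddCircle.exists_continuous_lift (hφc.comp continuous_quotient_mk')
  obtain ⟨w, hw₀, hw⟩ := exists_semiconj_lift_add hφ hψc hψ hct hlift
  have hφN : φ^[N] = id := funext fun t => hinj <| by
    rw [hφ.iterate_right N, add_right_iterate_apply, hN, add_zero, id]
  obtain ⟨n, hn⟩ := exists_iterate_eq_add_intCast hψc hψ hφN
  refine ⟨w, hw₀, n, ?_⟩
  have hψN := hw.iterate_right N 0
  have hct_n := lift_apply_add_intCast hct hlift 0 n
  rw [hn, add_right_iterate_apply] at hψN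
  rw [Nat.cast_smul_eq_nsmul]
  exact add_left_cancel (hψN.symm.trans hct_n)

theorem Int.dvd_of_isCoprime_of_dvd_mul_sub {p q n k l : ℤ} (hpq : IsCoprime p q)
    (hk : q ∣ n * k - p) (hl : q ∣ n * l) : q ∣ l := by
  obtain ⟨t, ht⟩ := hk
  have hnq : IsCoprime n q := by
    obtain ⟨u, v, huv⟩ := hpq
    exact ⟨u * k, v - u * t, by linear_combination huv + u * ht⟩
  exact hnq.symm.dvd_of_dvd_mul_left hl

lemma dvd_sub_of_coe_eq_div {p q m : ℤ} (hq : q ≠ 0) {a : ℝ}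
    (ha : (a : UnitAddCircle) = ((p / q : ℝ) : UnitAddCircle)) (hm : (q : ℝ) * a = m) :
    q ∣ m - p := by
  obtain ⟨t, ht⟩ := (AddCircle.coe_eq_zero_iff 1).1
    (show ((a - p / q : ℝ) : UnitAddCircle) = 0 by rw [AddCircle.coe_sub, ha, sub_self])
  refine ⟨t, ?_⟩
  have hqt : (q : ℝ) * t = m - p := by
    rw [zsmul_one] at ht
    rw [ht, ← hm]
    field_simp
  exact_mod_cast hqt.symm

/-- Let `p, q` be coprime integers with `q ≥ 1`, let
`T = (ℝ/ℤ) × (ℝ/ℤ)` be the 2-torus and `r : T → T` the rotation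
`r (x, y) = (x + p/q, y)`.  If `c : ℝ/ℤ → T` is a continuous injective loop
whose image is invariant under `r`, and `c̃ : ℝ → ℝ²` is a continuous lift of
`c` with `c̃ 1 - c̃ 0 = (k, l) ∈ ℤ × ℤ`, then `q ∣ l`. -/
theorem torus_invariant_curve_homology_class
    (p q : ℤ) (hq : 1 ≤ q) (hpq : Int.gcd p q = 1)
    (c : UnitAddCircle → UnitAddCircle × UnitAddCircle)
    (hc_cont : Continuous c) (hc_inj : Function.Injective c)
    (hinv :
      (fun z : UnitAddCircle × UnitAddCircle =>
          (z.1 + (((p : ℝ) / (q : ℝ) : ℝ) : UnitAddCircle), z.2)) ''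
        Set.range c = Set.range c)
    (ctilde : ℝ → ℝ × ℝ) (hct_cont : Continuous ctilde)
    (hlift : ∀ x : ℝ,
      ((((ctilde x).1 : ℝ) : UnitAddCircle), (((ctilde x).2 : ℝ) : UnitAddCircle))
        = c ((x : ℝ) : UnitAddCircle))
    (k l : ℤ) (hkl : ctilde 1 - ctilde 0 = ((k : ℝ), (l : ℝ))) :
    q ∣ l := by
  have hq₀ : q ≠ 0 := by omega
  have hqN : ((q.toNat : ℕ) : ℝ) = q := by exact_mod_cast Int.toNat_of_nonneg (by omega)
  set α : UnitAddCircle := ((p / q : ℝ) : UnitAddCircle)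
  have hqα : q.toNat • ((α, 0) : UnitAddCircle × UnitAddCircle) = 0 := by
    ext
    · rw [Prod.smul_fst, ← AddCircle.coe_nsmul, nsmul_eq_mul, hqN, mul_div_cancel₀ _ (by simpa)]
      exact (AddCircle.coe_eq_zero_iff 1).2 ⟨p, zsmul_one p⟩
    · simp
  have hrc : MapsTo (· + (α, 0)) (range c) (range c) := by
    rintro _ ⟨t, rfl⟩
    rw [← hinv]
    exact ⟨c t, mem_range_self t, Prod.ext rfl (add_zero _).symm⟩
  obtain ⟨w, hw₀, n, hw⟩ :=
    exists_translation_smul_eq_smul_homologyClass hqα hc_cont hc_inj hrc hct_cont hlift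
  rw [hkl, hqN] at hw
  have hwq : (q : ℝ) * w.1 = ((n * k : ℤ) : ℝ) ∧ (q : ℝ) * w.2 = ((n * l : ℤ) : ℝ) := by
    simpa [Prod.ext_iff] using hw
  refine Int.dvd_of_isCoprime_of_dvd_mul_sub (Int.isCoprime_iff_gcd_eq_one.2 hpq)
    (dvd_sub_of_coe_eq_div hq₀ (congrArg Prod.fst hw₀) hwq.1) ?_
  simpa using dvd_sub_of_coe_eq_div (p := 0) hq₀ (by simpa using congrArg Prod.snd hw₀) hwq.2
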